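/- arXiv:1410.0333 — 4 statements merged into one kernel-verified Lean document; each statement's English description precedes it below -/
import Mathlib

section
/- Let N ≥ 1, let A, B : Fin N → EuclideanSpace ℝ (Fin d), and let μ = (1/N) ∑_{i} δ_{A_i} and ν = (1/N) ∑_{j} δ_{B_j} be the associated empirical probability measures on EuclideanSpace ℝ (Fin d). Then the infimum, over all probability measures π on the product space EuclideanSpace ℝ (Fin d) × EuclideanSpace ℝ (Fin d) whose first marginal is μ and whose second marginal is ν, of ∫ ‖x − y‖² dπ(x,y), equals the minimum over all permutations σ of Fin N of (1/N) ∑_i ‖A_i − B_{σ_i}‖². That is, the squared quadratic Monge–Kantorovich distance between two empirical measures with the same number of atoms is computed by an optimal assignment (a permutation coupling). -/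
/-!
A coupling `π` of the two empirical measures is carried by the finitely many pairs of atoms.
Splitting the mass of each atom evenly among the index pairs carrying it and scaling by `N` turns
`π` into a doubly stochastic matrix whose cost against `c (A i) (B j)` is `N ∫ c dπ`. By
Birkhoff's theorem this matrix is a convex combination of permutation matrices, so the linear
cost of some permutation is at most that of `π`. Conversely every permutation `σ` is realised by
the coupling `(1/N) ∑ δ_(A i, B (σ i))`.
-/

open MeasureTheory Finset
open scoped ENNReal

theorem exists_perm_sum_le_of_mem_doublyStochastic {R n : Type*} [Field R] [LinearOrder R]
    [IsStrictOrderedRing R] [Fintype n] [DecidableEq n] {M : Matrix n n R}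
    (hM : M ∈ doublyStochastic R n) (C : Matrix n n R) :
    ∃ σ : Equiv.Perm n, ∑ i, C i (σ i) ≤ ∑ i, ∑ j, C i j * M i j := by
  let L : Matrix n n R →ₗ[R] R := ∑ i, ∑ j, C i j • Matrix.entryLinearMap R R i j
  have hL : ∀ M', L M' = ∑ i, ∑ j, C i j * M' i j := by simp [L, LinearMap.sum_apply]
  rw [← SetLike.mem_coe, doublyStochastic_eq_convexHull_permMatrix] at hM
  obtain ⟨_, ⟨σ, rfl⟩, hσ⟩ := (L.concaveOn convex_univ).exists_le_of_mem_convexHull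
    (Set.subset_univ _) hM
  refine ⟨σ, ?_⟩
  rw [hL, hL] at hσ
  simpa [Equiv.toPEquiv_apply, eq_comm] using hσ

theorem Finset.card_fiber_apply_pos {ι α : Type*} [Fintype ι] [DecidableEq α] (f : ι → α)
    (i : ι) : 0 < #{j | f j = f i} :=
  card_pos.2 ⟨i, by simp⟩

theorem Finset.sum_div_card_fiber {ι α K : Type*} [Fintype ι] [DecidableEq α] [Semifield K]
    [CharZero K] (f : ι → α) (g : α → K) :
    ∑ i, g (f i) / #{j | f j = f i} = ∑ x ∈ univ.image f, g x := by
  rw [sum_comp (fun x => g x / #{j | f j = x}) f]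
  refine sum_congr rfl fun x hx => ?_
  obtain ⟨i, -, rfl⟩ := mem_image.1 hx
  rw [nsmul_eq_mul, mul_div_cancel₀ _ (Nat.cast_ne_zero.2 (card_fiber_apply_pos f i).ne')]

theorem MeasureTheory.integral_eq_sum_of_ae_mem_finset {Z E : Type*} [MeasurableSpace Z]
    [MeasurableSingletonClass Z] [NormedAddCommGroup E] [NormedSpace ℝ E] [CompleteSpace E]
    {μ : Measure Z} [IsFiniteMeasure μ] {K : Finset Z} (hK : ∀ᵐ z ∂μ, z ∈ K) (f : Z → E) :
    ∫ z, f z ∂μ = ∑ z ∈ K, μ.real {z} • f z := by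
  rw [← Measure.restrict_eq_self_of_ae_mem hK, setIntegral_finset _ IntegrableOn.finset]
  simp only [Measure.restrict_eq_self_of_ae_mem hK]

namespace MeasureTheory.Measure

variable {X Y : Type*} [MeasurableSpace X] [MeasurableSpace Y] [MeasurableSingletonClass X]
  [MeasurableSingletonClass Y] {π : Measure (X × Y)} [IsFiniteMeasure π]

theorem fst_real_singleton_eq_sum {T : Finset Y} (hT : ∀ᵐ p ∂π, p.2 ∈ T) (x : X) :
    π.fst.real {x} = ∑ y ∈ T, π.real {(x, y)} := by
  have hfiber : Prod.fst ⁻¹' {x} =ᵐ[π] ⋃ y ∈ T, {(x, y)} := by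
    refine Filter.eventuallyEq_set.2 ?_
    filter_upwards [hT] with p hp
    simp [Prod.ext_iff, hp]
  rw [measureReal_def, fst_apply (measurableSet_singleton x), ← measureReal_def,
    measureReal_congr hfiber, measureReal_biUnion_finset _ fun _ _ => measurableSet_singleton _]
  simp

theorem snd_real_singleton_eq_sum {S : Finset X} (hS : ∀ᵐ p ∂π, p.1 ∈ S) (y : Y) :
    π.snd.real {y} = ∑ x ∈ S, π.real {(x, y)} := by
  have hS' : ∀ᵐ p ∂π.map Prod.swap, p.2 ∈ S :=
    (ae_map_iff measurable_swap.aemeasurable (measurable_snd S.finite_toSet.measurableSet)).2 hS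
  rw [← fst_map_swap, fst_real_singleton_eq_sum hS']
  refine Finset.sum_congr rfl fun x _ => ?_
  rw [map_measureReal_apply measurable_swap (measurableSet_singleton _)]
  congr 1
  ext ⟨a, b⟩
  simp [and_comm]

end MeasureTheory.Measure

noncomputable def empiricalMeasure {X : Type*} [MeasurableSpace X] {N : ℕ} (A : Fin N → X) :
    Measure X :=
  (N : ℝ≥0∞)⁻¹ • ∑ i, Measure.dirac (A i)

section Empirical

variable {X Y : Type*} [MeasurableSpace X] [MeasurableSpace Y] {N : ℕ}

theorem isProbabilityMeasure_empiricalMeasure (hN : N ≠ 0) (A : Fin N → X) :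
    IsProbabilityMeasure (empiricalMeasure A) :=
  ⟨by simp [empiricalMeasure, ENNReal.inv_mul_cancel, hN]⟩

theorem map_empiricalMeasure {f : X → Y} (hf : Measurable f) (A : Fin N → X) :
    (empiricalMeasure A).map f = empiricalMeasure (f ∘ A) := by
  simp [empiricalMeasure, Measure.map_smul, Measure.map_finset_sum hf.aemeasurable,
    Measure.map_dirac' hf]

theorem empiricalMeasure_comp_perm (A : Fin N → X) (σ : Equiv.Perm (Fin N)) :
    empiricalMeasure (A ∘ σ) = empiricalMeasure A := by
  simp only [empiricalMeasure, Function.comp_apply, Equiv.sum_comp σ fun i => Measure.dirac (A i)]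

variable [MeasurableSingletonClass X]

theorem integral_empiricalMeasure {E : Type*} [NormedAddCommGroup E] [NormedSpace ℝ E]
    [CompleteSpace E] (A : Fin N → X) (f : X → E) :
    ∫ x, f x ∂empiricalMeasure A = (N : ℝ)⁻¹ • ∑ i, f (A i) := by
  rw [empiricalMeasure, integral_smul_measure,
    integral_finsetSum_measure fun i _ => integrable_dirac enorm_lt_top]
  simp [integral_dirac]

theorem empiricalMeasure_real_singleton [DecidableEq X] (A : Fin N → X) (x : X) :
    (empiricalMeasure A).real {x} = #{i | A i = x} / N := by
  simp [empiricalMeasure, measureReal_def, Set.indicator, sum_boole, div_eq_inv_mul]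

theorem ae_empiricalMeasure_mem_image [DecidableEq X] (A : Fin N → X) :
    ∀ᵐ x ∂empiricalMeasure A, x ∈ univ.image A := by
  rw [ae_iff]
  simp [empiricalMeasure, Measure.dirac_apply, Set.indicator]

end Empirical

section Coupling

variable {X Y : Type*} [MeasurableSpace X] [MeasurableSpace Y] {N : ℕ}
  {π : Measure (X × Y)} {A : Fin N → X} {B : Fin N → Y}

theorem ae_fst_mem_image [MeasurableSingletonClass X] [DecidableEq X]
    (h1 : π.fst = empiricalMeasure A) : ∀ᵐ p ∂π, p.1 ∈ univ.image A :=
  ae_of_ae_map measurable_fst.aemeasurable <| by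
    rw [← Measure.fst, h1]
    exact ae_empiricalMeasure_mem_image A

theorem ae_snd_mem_image [MeasurableSingletonClass Y] [DecidableEq Y]
    (h2 : π.snd = empiricalMeasure B) : ∀ᵐ p ∂π, p.2 ∈ univ.image B :=
  ae_of_ae_map measurable_snd.aemeasurable <| by
    rw [← Measure.snd, h2]
    exact ae_empiricalMeasure_mem_image B

variable [DecidableEq X] [DecidableEq Y]

/-- The mass of the atom `(A i, B j)` is split evenly among the index pairs carrying it. -/
noncomputable def couplingMatrix (π : Measure (X × Y)) (A : Fin N → X) (B : Fin N → Y) :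
    Matrix (Fin N) (Fin N) ℝ :=
  fun i j => N * π.real {(A i, B j)} / (#{k | A k = A i} * #{k | B k = B j})

variable [MeasurableSingletonClass X] [MeasurableSingletonClass Y] [IsFiniteMeasure π]

theorem couplingMatrix_mem_doublyStochastic (hN : N ≠ 0) (h1 : π.fst = empiricalMeasure A)
    (h2 : π.snd = empiricalMeasure B) : couplingMatrix π A B ∈ doublyStochastic ℝ (Fin N) := by
  refine mem_doublyStochastic_iff_sum.2 ⟨fun i j => by unfold couplingMatrix; positivity,
    fun i => ?_, fun j => ?_⟩
  · calc ∑ j, couplingMatrix π A B i j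
        = ∑ j, N * π.real {(A i, B j)} / #{k | A k = A i} / #{k | B k = B j} := by
          simp only [couplingMatrix, div_div]
      _ = N / #{k | A k = A i} * π.fst.real {A i} := by
          rw [sum_div_card_fiber B (fun y => N * π.real {(A i, y)} / #{k | A k = A i}),
            Measure.fst_real_singleton_eq_sum (ae_snd_mem_image h2), mul_sum]
          exact Finset.sum_congr rfl fun _ _ => by ring
      _ = 1 := by
          rw [h1, empiricalMeasure_real_singleton]
          field_simp [(card_fiber_apply_pos A i).ne']
  · calc ∑ i, couplingMatrix π A B i j
        = ∑ i, N * π.real {(A i, B j)} / #{k | B k = B j} / #{k | A k = A i} := by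
          simp only [couplingMatrix, div_div, mul_comm]
      _ = N / #{k | B k = B j} * π.snd.real {B j} := by
          rw [sum_div_card_fiber A (fun x => N * π.real {(x, B j)} / #{k | B k = B j}),
            Measure.snd_real_singleton_eq_sum (ae_fst_mem_image h1), mul_sum]
          exact Finset.sum_congr rfl fun _ _ => by ring
      _ = 1 := by
          rw [h2, empiricalMeasure_real_singleton]
          field_simp [(card_fiber_apply_pos B j).ne']

theorem sum_mul_couplingMatrix (h1 : π.fst = empiricalMeasure A)
    (h2 : π.snd = empiricalMeasure B) (c : X → Y → ℝ) :
    ∑ i, ∑ j, c (A i) (B j) * couplingMatrix π A B i j = N * ∫ p, c p.1 p.2 ∂π := by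
  have hsupp : ∀ᵐ p ∂π, p ∈ univ.image A ×ˢ univ.image B := by
    filter_upwards [ae_fst_mem_image h1, ae_snd_mem_image h2] with p hp1 hp2
    exact mem_product.2 ⟨hp1, hp2⟩
  rw [integral_eq_sum_of_ae_mem_finset hsupp, sum_product, mul_sum]
  calc ∑ i, ∑ j, c (A i) (B j) * couplingMatrix π A B i j
      = ∑ i, (∑ j, N * (π.real {(A i, B j)} * c (A i) (B j)) / #{k | B k = B j})
          / #{k | A k = A i} := by
        simp only [couplingMatrix, sum_div]
        refine Finset.sum_congr rfl fun i _ => Finset.sum_congr rfl fun j _ => ?_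
        ring
    _ = ∑ i, (∑ y ∈ univ.image B, N * (π.real {(A i, y)} * c (A i) y)) / #{k | A k = A i} :=
        Finset.sum_congr rfl fun i _ => by
          rw [sum_div_card_fiber B fun y => N * (π.real {(A i, y)} * c (A i) y)]
    _ = ∑ x ∈ univ.image A, ∑ y ∈ univ.image B, N * (π.real {(x, y)} * c x y) :=
        sum_div_card_fiber A fun x => ∑ y ∈ univ.image B, N * (π.real {(x, y)} * c x y)
    _ = ∑ x ∈ univ.image A, N * ∑ y ∈ univ.image B, π.real {(x, y)} • c x y := by
        simp only [smul_eq_mul, mul_sum]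

theorem exists_perm_le_integral_of_fst_snd (hN : N ≠ 0) (h1 : π.fst = empiricalMeasure A)
    (h2 : π.snd = empiricalMeasure B) (c : X → Y → ℝ) :
    ∃ σ : Equiv.Perm (Fin N), (N : ℝ)⁻¹ * ∑ i, c (A i) (B (σ i)) ≤ ∫ p, c p.1 p.2 ∂π := by
  obtain ⟨σ, hσ⟩ := exists_perm_sum_le_of_mem_doublyStochastic
    (couplingMatrix_mem_doublyStochastic hN h1 h2) fun i j => c (A i) (B j)
  refine ⟨σ, ?_⟩
  rw [sum_mul_couplingMatrix h1 h2] at hσ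
  rwa [inv_mul_le_iff₀ (by positivity)]

end Coupling

/-- The squared quadratic Monge–Kantorovich distance between two empirical measures
with the same number of atoms equals the minimum over permutation couplings. -/
theorem MK2_empirical_is_assignment (d N : ℕ) (hN : 1 ≤ N)
    (A B : Fin N → EuclideanSpace ℝ (Fin d)) :
    sInf {r : ℝ | ∃ π : Measure (EuclideanSpace ℝ (Fin d) × EuclideanSpace ℝ (Fin d)),
        IsProbabilityMeasure π ∧
        π.fst = (N : ℝ≥0∞)⁻¹ • ∑ i, Measure.dirac (A i) ∧
        π.snd = (N : ℝ≥0∞)⁻¹ • ∑ j, Measure.dirac (B j) ∧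
        r = ∫ p, ‖p.1 - p.2‖ ^ 2 ∂π} =
      (Finset.univ : Finset (Equiv.Perm (Fin N))).inf' Finset.univ_nonempty
        (fun σ => (1 / N : ℝ) * ∑ i, ‖A i - B (σ i)‖ ^ 2) := by
  classical
  have hN0 : N ≠ 0 := by omega
  refine IsLeast.csInf_eq ⟨?_, ?_⟩
  · obtain ⟨σ, -, hσ⟩ := exists_mem_eq_inf' univ_nonempty
      fun σ : Equiv.Perm (Fin N) => (1 / N : ℝ) * ∑ i, ‖A i - B (σ i)‖ ^ 2
    refine ⟨empiricalMeasure fun i => (A i, B (σ i)),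
      isProbabilityMeasure_empiricalMeasure hN0 _, ?_, ?_, ?_⟩
    · exact map_empiricalMeasure measurable_fst _
    · rw [Measure.snd, map_empiricalMeasure measurable_snd]
      exact empiricalMeasure_comp_perm B σ
    · rw [hσ, integral_empiricalMeasure, one_div, smul_eq_mul]
  · rintro r ⟨π, hπ, h1, h2, rfl⟩
    obtain ⟨σ, hσ⟩ := exists_perm_le_integral_of_fst_snd hN0 h1 h2 fun x y => ‖x - y‖ ^ 2
    exact (inf'_le _ (mem_univ σ)).trans (by rwa [one_div])
end

section
/- Let d ≥ 1, let Q be a symmetric d×d real matrix, and let M : ℝ → Matrix (Fin d) (Fin d) ℝ be differentiable with M(t) symmetric for all t and M'(t) = [[M(t), Q], M(t)] for all t. Then for every t, the function t ↦ trace(M(t)*Q) has derivative equal to −∑_{i,j} ([M(t),Q]_{ij})², i.e. d/dt trace(M(t)Q) = −‖[M(t),Q]‖²_F ≤ 0, where ‖·‖_F is the Frobenius norm. In particular t ↦ trace(M(t)Q) is nonincreasing, and it is strictly decreasing at any time where M(t) does not commute with Q. -/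
/-!
Since `trace ([A, M] Q) = trace (A [M, Q])`, the derivative `trace (M' Q)` along the flow
`M' = [[M, Q], M]` equals `trace ([M, Q]²)`. For symmetric `M` and `Q` the commutator `[M, Q]`
is skew-symmetric, so this is `-trace ([M, Q]ᵀ [M, Q]) = -‖[M, Q]‖²_F ≤ 0`.
-/

open Matrix

namespace Matrix

variable {m n R : Type*} [Fintype m] [Fintype n]

theorem trace_transpose_mul_self [CommSemiring R] (A : Matrix m n R) :
    (Aᵀ * A).trace = ∑ i, ∑ j, A i j ^ 2 := by
  rw [Finset.sum_comm]
  simp only [trace, diag, mul_apply, transpose_apply, sq]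

theorem trace_mul_self_of_transpose_eq_neg [CommRing R] {A : Matrix n n R} (hA : Aᵀ = -A) :
    (A * A).trace = -∑ i, ∑ j, A i j ^ 2 := by
  rw [← trace_transpose_mul_self, hA, neg_mul, trace_neg, neg_neg]

theorem transpose_commutator_of_isSymm [CommRing R] {M Q : Matrix n n R} (hM : M.IsSymm)
    (hQ : Q.IsSymm) : (M * Q - Q * M)ᵀ = -(M * Q - Q * M) := by
  rw [transpose_sub, transpose_mul, transpose_mul, hM.eq, hQ.eq, neg_sub]

theorem trace_commutator_mul [CommRing R] (A M Q : Matrix n n R) :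
    ((A * M - M * A) * Q).trace = (A * (M * Q - Q * M)).trace := by
  rw [sub_mul, mul_sub, trace_sub, trace_sub, Matrix.mul_assoc A M Q,
    trace_mul_cycle M A Q, trace_mul_comm (Q * M) A]

theorem trace_commutator_commutator_mul_of_isSymm [CommRing R] {M Q : Matrix n n R}
    (hM : M.IsSymm) (hQ : Q.IsSymm) :
    (((M * Q - Q * M) * M - M * (M * Q - Q * M)) * Q).trace
      = -∑ i, ∑ j, (M * Q - Q * M) i j ^ 2 := by
  rw [trace_commutator_mul,
    trace_mul_self_of_transpose_eq_neg (transpose_commutator_of_isSymm hM hQ)]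

theorem hasDerivAt_trace_mul_const {𝕜 : Type*} [NontriviallyNormedField 𝕜]
    {M : 𝕜 → Matrix m n 𝕜} {M' : Matrix m n 𝕜} {t : 𝕜}
    (hM : ∀ i j, HasDerivAt (fun s => M s i j) (M' i j) t) (Q : Matrix n m 𝕜) :
    HasDerivAt (fun s => (M s * Q).trace) (M' * Q).trace t := by
  simp only [trace, diag, mul_apply]
  exact HasDerivAt.fun_sum fun i _ => HasDerivAt.fun_sum fun j _ => (hM i j).mul_const _

end Matrix

theorem brockett_trace_dissipation_general (d : ℕ)
    (Q : Matrix (Fin d) (Fin d) ℝ) (hQ : Qᵀ = Q)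
    (M : ℝ → Matrix (Fin d) (Fin d) ℝ)
    (hsymm : ∀ t, (M t)ᵀ = M t)
    (hM : ∀ t, ∀ i j,
      HasDerivAt (fun s => M s i j)
        (((M t * Q - Q * M t) * M t - M t * (M t * Q - Q * M t)) i j) t) :
    (∀ t, HasDerivAt (fun s => (M s * Q).trace)
        (-(∑ i, ∑ j, ((M t * Q - Q * M t) i j) ^ 2)) t) ∧
    (∀ s t, s ≤ t → (M t * Q).trace ≤ (M s * Q).trace) := by
  have hderiv : ∀ t, HasDerivAt (fun s => (M s * Q).trace)
      (-(∑ i, ∑ j, ((M t * Q - Q * M t) i j) ^ 2)) t := fun t => by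
    rw [← trace_commutator_commutator_mul_of_isSymm (hsymm t) hQ]
    exact hasDerivAt_trace_mul_const (hM t) Q
  refine ⟨hderiv, fun s t hst => antitone_of_hasDerivAt_nonpos hderiv (fun t => ?_) hst⟩
  exact neg_nonpos.2 (by positivity)

/-- Along the Brockett flow `M' = [[M,Q],M]` with `M` and `Q` symmetric, the
function `t ↦ trace (M t * Q)` has derivative `-‖[M t, Q]‖²_F`; in particular
it is nonincreasing. -/
theorem brockett_trace_dissipation (d : ℕ) (hd : 1 ≤ d)
    (Q : Matrix (Fin d) (Fin d) ℝ) (hQ : Qᵀ = Q)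
    (M : ℝ → Matrix (Fin d) (Fin d) ℝ)
    (hsymm : ∀ t, (M t)ᵀ = M t)
    (hM : ∀ t, ∀ i j,
      HasDerivAt (fun s => M s i j)
        (((M t * Q - Q * M t) * M t - M t * (M t * Q - Q * M t)) i j) t) :
    (∀ t, HasDerivAt (fun s => (M s * Q).trace)
        (-(∑ i, ∑ j, ((M t * Q - Q * M t) i j) ^ 2)) t) ∧
    (∀ s t, s ≤ t → (M t * Q).trace ≤ (M s * Q).trace) :=
  brockett_trace_dissipation_general d Q hQ M hsymm hM
end

section
/- Let d ≥ 1, let ψ : EuclideanSpace ℝ (Fin d) → ℝ be smooth with compact support, set β = ∇ψ, and let ω : EuclideanSpace ℝ (Fin d) → EuclideanSpace ℝ (Fin d) be smooth with compact support and divergence-free (∑_i ∂_i ω_i = 0 pointwise). Then ∑_{i,j} ∫ ∂_i ψ(x) ∂_j ψ(x) (∂_j ω_i(x) + ∂_i ω_j(x)) dx + 2 ∫ (∇ψ(x) · ω(x)) Δψ(x) dx = 0, where Δψ = ∑_j ∂_j ∂_j ψ. Equivalently, the 'constant term' J^C = ∫ [−β_i β_j (ω_{i,j} + ω_{j,i})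 − 2 β_i ω_i β_{j,j}] dx vanishes whenever β is a gradient and ω is divergence-free. -/
open MeasureTheory

/-- The partial derivative of `f` in the `j`-th coordinate direction. -/
noncomputable def pd {d : ℕ} (j : Fin d) (f : EuclideanSpace ℝ (Fin d) → ℝ)
    (x : EuclideanSpace ℝ (Fin d)) : ℝ :=
  fderiv ℝ f x (EuclideanSpace.single j 1)

namespace JCaux

variable {d : ℕ}

lemma pd_contDiff {f : EuclideanSpace ℝ (Fin d) → ℝ} (hf : ContDiff ℝ (⊤ : ℕ∞) f) (j : Fin d) :
    ContDiff ℝ (⊤ : ℕ∞) (pd j f) := by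
  unfold pd
  exact (hf.fderiv_right (by simp)).clm_apply contDiff_const

lemma pd_hcs {f : EuclideanSpace ℝ (Fin d) → ℝ} (hf : HasCompactSupport f) (j : Fin d) :
    HasCompactSupport (pd j f) := by
  unfold pd
  exact hf.fderiv_apply ℝ _

lemma intCC {f g : EuclideanSpace ℝ (Fin d) → ℝ} (hf : Continuous f) (hg : Continuous g)
    (h : HasCompactSupport f) : Integrable (fun x => f x * g x) := by
  exact (hf.mul hg).integrable_of_hasCompactSupport (h.mul_right)

lemma pd_mul {f g : EuclideanSpace ℝ (Fin d) → ℝ} (hf : ContDiff ℝ (⊤ : ℕ∞) f) (hg : ContDiff ℝ (⊤ : ℕ∞) g)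
    (j : Fin d) (x : EuclideanSpace ℝ (Fin d)) :
    pd j (fun y => f y * g y) x = pd j f x * g x + f x * pd j g x := by
  unfold pd
  rw [fderiv_fun_mul ((hf.differentiable (by simp)) x) ((hg.differentiable (by simp)) x)]
  simp [mul_comm]
  ring

lemma ibp {f g : EuclideanSpace ℝ (Fin d) → ℝ} (hf : ContDiff ℝ (⊤ : ℕ∞) f) (hg : ContDiff ℝ (⊤ : ℕ∞) g)
    (hfc : HasCompactSupport f) (j : Fin d) :
    ∫ x, f x * pd j g x = - ∫ x, pd j f x * g x := by
  exact integral_mul_fderiv_eq_neg_fderiv_mul_of_integrable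
    (intCC (pd_contDiff hf j).continuous hg.continuous (pd_hcs hfc j))
    (intCC hf.continuous (pd_contDiff hg j).continuous hfc)
    (intCC hf.continuous hg.continuous hfc)
    (fun x _ => hf.differentiable (by simp) x) (fun x _ => hg.differentiable (by simp) x)

lemma pd_symm {ψ : EuclideanSpace ℝ (Fin d) → ℝ} (hψ : ContDiff ℝ (⊤ : ℕ∞) ψ) (i j : Fin d)
    (x : EuclideanSpace ℝ (Fin d)) : pd i (pd j ψ) x = pd j (pd i ψ) x := by
  have hdc : Differentiable ℝ (fderiv ℝ ψ) :=
    (hψ.fderiv_right (m := 1) (WithTop.coe_le_coe.mpr le_top)).differentiable (by simp)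
  have key : ∀ v w : EuclideanSpace ℝ (Fin d),
      fderiv ℝ (fun y => fderiv ℝ ψ y w) x v = fderiv ℝ (fderiv ℝ ψ) x v w := by
    intro v w
    rw [fderiv_clm_apply (hdc x) (differentiableAt_const w)]
    simp
  unfold pd
  rw [key, key]
  exact second_derivative_symmetric (fun y => ((hψ.differentiable (by simp)) y).hasFDerivAt)
    (hdc x).hasFDerivAt _ _

end JCaux

namespace JCaux

lemma intC3 {d : ℕ} {f g h : EuclideanSpace ℝ (Fin d) → ℝ} (hf : Continuous f)
    (hg : Continuous g) (hh : Continuous h) (hc : HasCompactSupport f) :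
    Integrable (fun x => f x * g x * h x) :=
  ((hf.mul hg).mul hh).integrable_of_hasCompactSupport ((hc.mul_right).mul_right)

end JCaux

set_option maxHeartbeats 2000000 in
/-- Vanishing of the constant term `J^C`: for `β = ∇ψ` a gradient and `ω`
divergence-free, `∫ β_i β_j (ω_{i,j} + ω_{j,i}) + 2 ∫ (β·ω) Δψ = 0`. -/
theorem JC_vanishes (d : ℕ) (hd : 1 ≤ d)
    (ψ : EuclideanSpace ℝ (Fin d) → ℝ)
    (hψ : ContDiff ℝ (⊤ : ℕ∞) ψ) (hψc : HasCompactSupport ψ)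
    (ω : EuclideanSpace ℝ (Fin d) → EuclideanSpace ℝ (Fin d))
    (hω : ContDiff ℝ (⊤ : ℕ∞) ω) (hωc : HasCompactSupport ω)
    (hdiv : ∀ x, ∑ i, pd i (fun y => ω y i) x = 0) :
    (∑ i, ∑ j, ∫ x, pd i ψ x * pd j ψ x *
          (pd j (fun y => ω y i) x + pd i (fun y => ω y j) x))
      + 2 * (∫ x, (∑ i, pd i ψ x * ω x i) * (∑ j, pd j (pd j ψ) x)) = 0 := by
  have hcω : ∀ i : Fin d, ContDiff ℝ (⊤ : ℕ∞) (fun y => ω y i) := by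
    intro i
    exact (EuclideanSpace.proj (𝕜 := ℝ) i).contDiff.comp hω
  have hsω : ∀ i : Fin d, HasCompactSupport (fun y => ω y i) := fun i => by
    exact hωc.comp_left (g := fun v : EuclideanSpace ℝ (Fin d) => v i) rfl
  have hcψ : ∀ i : Fin d, ContDiff ℝ (⊤ : ℕ∞) (pd i ψ) := fun i => JCaux.pd_contDiff hψ i
  have hsψ : ∀ i : Fin d, HasCompactSupport (pd i ψ) := fun i => JCaux.pd_hcs hψc i
  have hcψ2 : ∀ i j : Fin d, ContDiff ℝ (⊤ : ℕ∞) (pd j (pd i ψ)) := fun i j =>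
    JCaux.pd_contDiff (hcψ i) j
  have hsψ2 : ∀ i j : Fin d, HasCompactSupport (pd j (pd i ψ)) := fun i j =>
    JCaux.pd_hcs (hsψ i) j
  -- the three families
  have step1 : ∀ i j : Fin d,
      (∫ x, pd i ψ x * pd j ψ x *
          (pd j (fun y => ω y i) x + pd i (fun y => ω y j) x))
      = (∫ x, pd i ψ x * pd j ψ x * pd j (fun y => ω y i) x)
        + ∫ x, pd j ψ x * pd i ψ x * pd i (fun y => ω y j) x := by
    intro i j
    rw [← integral_add
      (JCaux.intC3 (hcψ i).continuous (hcψ j).continuous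
        (JCaux.pd_contDiff (hcω i) j).continuous (hsψ i))
      (JCaux.intC3 (hcψ j).continuous (hcψ i).continuous
        (JCaux.pd_contDiff (hcω j) i).continuous (hsψ j))]
    congr 1; funext x; ring
  -- integration by parts on A i j
  have step2 : ∀ i j : Fin d,
      (∫ x, pd i ψ x * pd j ψ x * pd j (fun y => ω y i) x)
      = -(∫ x, pd j (pd i ψ) x * pd j ψ x * ω x i)
        - ∫ x, pd i ψ x * pd j (pd j ψ) x * ω x i := by
    intro i j
    have h := JCaux.ibp (f := fun x => pd i ψ x * pd j ψ x) (g := fun y => ω y i)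
      ((hcψ i).mul (hcψ j)) (hcω i) ((hsψ i).mul_right) j
    have hprod : ∀ x, pd j (fun x => pd i ψ x * pd j ψ x) x
        = pd j (pd i ψ) x * pd j ψ x + pd i ψ x * pd j (pd j ψ) x :=
      JCaux.pd_mul (hcψ i) (hcψ j) j
    rw [show (fun x => pd i ψ x * pd j ψ x * pd j (fun y => ω y i) x)
        = fun x => (fun x => pd i ψ x * pd j ψ x) x * pd j (fun y => ω y i) x from rfl]
    rw [h]
    simp only [hprod]
    rw [show (fun x => (pd j (pd i ψ) x * pd j ψ x + pd i ψ x * pd j (pd j ψ) x) * ω x i)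
        = fun x => pd j (pd i ψ) x * pd j ψ x * ω x i
            + pd i ψ x * pd j (pd j ψ) x * ω x i from by funext x; ring]
    rw [integral_add
      (JCaux.intC3 (hcψ2 i j).continuous (hcψ j).continuous (hcω i).continuous (hsψ2 i j))
      (JCaux.intC3 (hcψ i).continuous (hcψ2 j j).continuous (hcω i).continuous (hsψ i))]
    ring
  -- the B-sum vanishes
  have stepB : (∑ i : Fin d, ∑ j : Fin d, ∫ x, pd j (pd i ψ) x * pd j ψ x * ω x i) = 0 := by
    have hBij : ∀ i j : Fin d,
        (∫ x, pd j (pd i ψ) x * pd j ψ x * ω x i)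
        = -(1/2) * ∫ x, pd j ψ x * pd j ψ x * pd i (fun y => ω y i) x := by
      intro i j
      have h := JCaux.ibp (f := fun x => pd j ψ x * pd j ψ x) (g := fun y => ω y i)
        ((hcψ j).mul (hcψ j)) (hcω i) ((hsψ j).mul_right) i
      have hprod : ∀ x, pd i (fun x => pd j ψ x * pd j ψ x) x
          = pd i (pd j ψ) x * pd j ψ x + pd j ψ x * pd i (pd j ψ) x :=
        JCaux.pd_mul (hcψ j) (hcψ j) i
      have hsymm : ∀ x, pd i (pd j ψ) x = pd j (pd i ψ) x := JCaux.pd_symm hψ i j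
      have h2 : (∫ x, pd j ψ x * pd j ψ x * pd i (fun y => ω y i) x)
          = - ∫ x, 2 * (pd j (pd i ψ) x * pd j ψ x * ω x i) := by
        rw [h]
        congr 1
        congr 1
        funext x
        rw [hprod x, hsymm x]
        ring
      rw [h2, integral_const_mul]
      ring
    calc (∑ i : Fin d, ∑ j : Fin d, ∫ x, pd j (pd i ψ) x * pd j ψ x * ω x i)
        = ∑ i : Fin d, ∑ j : Fin d,
            -(1/2) * ∫ x, pd j ψ x * pd j ψ x * pd i (fun y => ω y i) x := by
          exact Finset.sum_congr rfl fun i _ => Finset.sum_congr rfl fun j _ => hBij i j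
      _ = ∑ j : Fin d, -(1/2) * ∑ i : Fin d,
            ∫ x, pd j ψ x * pd j ψ x * pd i (fun y => ω y i) x := by
          rw [Finset.sum_comm]
          exact Finset.sum_congr rfl fun j _ => (Finset.mul_sum _ _ _).symm
      _ = 0 := by
          apply Finset.sum_eq_zero
          intro j _
          have : (∑ i : Fin d, ∫ x, pd j ψ x * pd j ψ x * pd i (fun y => ω y i) x)
              = ∫ x, ∑ i : Fin d, pd j ψ x * pd j ψ x * pd i (fun y => ω y i) x := by
            rw [integral_finset_sum]
            intro i _
            exact JCaux.intC3 (hcψ j).continuous (hcψ j).continuous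
              (JCaux.pd_contDiff (hcω i) i).continuous (hsψ j)
          rw [this]
          have : (fun x => ∑ i : Fin d, pd j ψ x * pd j ψ x * pd i (fun y => ω y i) x)
              = fun _ => (0:ℝ) := by
            funext x
            rw [← Finset.mul_sum, hdiv x, mul_zero]
          rw [this, integral_zero, mul_zero]
  -- the C-sum equals the dot-product integral
  have stepC : (∑ i : Fin d, ∑ j : Fin d, ∫ x, pd i ψ x * pd j (pd j ψ) x * ω x i)
      = ∫ x, (∑ i, pd i ψ x * ω x i) * (∑ j, pd j (pd j ψ) x) := by
    have h1 : ∀ i : Fin d, (∑ j : Fin d, ∫ x, pd i ψ x * pd j (pd j ψ) x * ω x i)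
        = ∫ x, ∑ j : Fin d, pd i ψ x * pd j (pd j ψ) x * ω x i := by
      intro i
      rw [integral_finset_sum]
      intro j _
      exact JCaux.intC3 (hcψ i).continuous (hcψ2 j j).continuous (hcω i).continuous (hsψ i)
    have h2 : (∑ i : Fin d, ∫ x, ∑ j : Fin d, pd i ψ x * pd j (pd j ψ) x * ω x i)
        = ∫ x, ∑ i : Fin d, ∑ j : Fin d, pd i ψ x * pd j (pd j ψ) x * ω x i := by
      rw [integral_finset_sum]
      intro i _
      apply integrable_finset_sum
      intro j _
      exact JCaux.intC3 (hcψ i).continuous (hcψ2 j j).continuous (hcω i).continuous (hsψ i)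
    simp only [h1]
    rw [h2]
    congr 1
    funext x
    rw [Finset.sum_mul_sum]
    exact Finset.sum_congr rfl fun i _ => Finset.sum_congr rfl fun j _ => by ring
  -- assemble
  simp only [step1]
  have hswap : (∑ i : Fin d, ∑ j : Fin d,
        ∫ x, pd j ψ x * pd i ψ x * pd i (fun y => ω y j) x)
      = ∑ i : Fin d, ∑ j : Fin d, ∫ x, pd i ψ x * pd j ψ x * pd j (fun y => ω y i) x := by
    rw [Finset.sum_comm]
  have hX : (∑ i : Fin d, ∑ j : Fin d, ∫ x, pd i ψ x * pd j ψ x * pd j (fun y => ω y i) x)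
      = -(∫ x, (∑ i, pd i ψ x * ω x i) * (∑ j, pd j (pd j ψ) x)) := by
    calc (∑ i : Fin d, ∑ j : Fin d, ∫ x, pd i ψ x * pd j ψ x * pd j (fun y => ω y i) x)
        = ∑ i : Fin d, ∑ j : Fin d,
          (-(∫ x, pd j (pd i ψ) x * pd j ψ x * ω x i)
            - ∫ x, pd i ψ x * pd j (pd j ψ) x * ω x i) :=
        Finset.sum_congr rfl fun i _ => Finset.sum_congr rfl fun j _ => step2 i j
      _ = -(∫ x, (∑ i, pd i ψ x * ω x i) * (∑ j, pd j (pd j ψ) x)) := by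
        simp only [Finset.sum_sub_distrib, Finset.sum_neg_distrib]
        rw [stepB, stepC]
        ring
  simp only [Finset.sum_add_distrib]
  rw [hswap, hX]
  ring
end

section
/- Let d ≥ 1, let χ, ψ : EuclideanSpace ℝ (Fin d) → ℝ be smooth with compact support, and let ω : EuclideanSpace ℝ (Fin d) → EuclideanSpace ℝ (Fin d) be smooth with compact support and divergence-free (∑_i ∂_i ω_i = 0 pointwise). Then ∑_i ∫ ∂_i χ(x) [ −∑_j ∂_j ψ(x)(∂_j ω_i(x) + ∂_i ω_j(x)) + ∂_i( ω(x) · ∇ψ(x) ) − ω_i(x) Δψ(x) ] dx = 0. Equivalently, with a = ∇χ a gradient field and β = ∇ψ, one has ∫ a_i [−β_j(ω_{i,j} + ω_{j,i}) − ω_i β_{j,j}] dx = −∫ a · ∇(ω·β) dx. -/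
open MeasureTheory

section PD

variable {d : ℕ}

lemma pd_contDiff {f : EuclideanSpace ℝ (Fin d) → ℝ} (hf : ContDiff ℝ (⊤ : ℕ∞) f) (j : Fin d) :
    ContDiff ℝ (⊤ : ℕ∞) (pd j f) :=
  (hf.fderiv_right (by simp)).clm_apply contDiff_const

lemma pd_hcs {f : EuclideanSpace ℝ (Fin d) → ℝ} (hf : HasCompactSupport f) (j : Fin d) :
    HasCompactSupport (pd j f) :=
  hf.fderiv_apply ℝ (EuclideanSpace.single j 1)

lemma pd_mul {f g : EuclideanSpace ℝ (Fin d) → ℝ} (hf : ContDiff ℝ (⊤ : ℕ∞) f) (hg : ContDiff ℝ (⊤ : ℕ∞) g)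
    (j : Fin d) (x : EuclideanSpace ℝ (Fin d)) :
    pd j (fun y => f y * g y) x = pd j f x * g x + f x * pd j g x := by
  simp only [pd]
  rw [fderiv_fun_mul (hf.differentiable (by simp) x) (hg.differentiable (by simp) x)]
  simp only [ContinuousLinearMap.add_apply, ContinuousLinearMap.smul_apply, smul_eq_mul]
  ring

lemma pd_sub {f g : EuclideanSpace ℝ (Fin d) → ℝ} (hf : ContDiff ℝ (⊤ : ℕ∞) f) (hg : ContDiff ℝ (⊤ : ℕ∞) g)
    (j : Fin d) (x : EuclideanSpace ℝ (Fin d)) :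
    pd j (fun y => f y - g y) x = pd j f x - pd j g x := by
  simp only [pd]
  rw [fderiv_fun_sub (hf.differentiable (by simp) x) (hg.differentiable (by simp) x)]
  simp

lemma pd_sum {F : Fin d → EuclideanSpace ℝ (Fin d) → ℝ}
    (hF : ∀ i, ContDiff ℝ (⊤ : ℕ∞) (F i)) (j : Fin d) (x : EuclideanSpace ℝ (Fin d)) :
    pd j (fun y => ∑ i, F i y) x = ∑ i, pd j (F i) x := by
  simp only [pd]
  rw [fderiv_fun_sum (fun i _ => (hF i).differentiable (by simp) x)]
  simp

lemma pd_comm {f : EuclideanSpace ℝ (Fin d) → ℝ} (hf : ContDiff ℝ (⊤ : ℕ∞) f)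
    (i j : Fin d) (x : EuclideanSpace ℝ (Fin d)) :
    pd i (pd j f) x = pd j (pd i f) x := by
  have hdf : Differentiable ℝ (fderiv ℝ f) := (hf.fderiv_right (m := 1) (by exact WithTop.coe_le_coe.mpr le_top)).differentiable one_ne_zero
  have key : ∀ u v : EuclideanSpace ℝ (Fin d),
      fderiv ℝ (fun y => fderiv ℝ f y v) x u = fderiv ℝ (fderiv ℝ f) x u v := by
    intro u v
    rw [fderiv_clm_apply (hdf x) (differentiableAt_const v)]
    simp
  show fderiv ℝ (fun y => fderiv ℝ f y (EuclideanSpace.single j 1)) x (EuclideanSpace.single i 1)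
      = fderiv ℝ (fun y => fderiv ℝ f y (EuclideanSpace.single i 1)) x (EuclideanSpace.single j 1)
  rw [key, key]
  exact second_derivative_symmetric (fun y => (hf.differentiable (by simp) y).hasFDerivAt)
    (hdf x).hasFDerivAt _ _

lemma integral_pd_eq_zero {g : EuclideanSpace ℝ (Fin d) → ℝ}
    (hg : ContDiff ℝ (⊤ : ℕ∞) g) (hgc : HasCompactSupport g) (j : Fin d) :
    ∫ x, pd j g x = 0 := by
  set v : EuclideanSpace ℝ (Fin d) := EuclideanSpace.single j 1 with hv
  obtain ⟨r, hr0, hr⟩ := hgc.isBounded.subset_ball_lt 0 0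
  let φ : ContDiffBump (0 : EuclideanSpace ℝ (Fin d)) := ⟨r, r + 1, hr0, by linarith⟩
  have hφ1 : ∀ x ∈ Metric.ball (0 : EuclideanSpace ℝ (Fin d)) r, φ x = 1 := fun x hx =>
    φ.one_of_mem_closedBall (Metric.ball_subset_closedBall hx)
  have hφd : ∀ x ∈ tsupport g, fderiv ℝ (⇑φ) x = 0 := by
    intro x hx
    have h1 : (⇑φ) =ᶠ[nhds x] fun _ => (1 : ℝ) :=
      Filter.eventuallyEq_of_mem (Metric.isOpen_ball.mem_nhds (hr hx)) fun y hy => hφ1 y hy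
    rw [h1.fderiv_eq]
    exact fderiv_const_apply 1
  have hgd : Differentiable ℝ g := hg.differentiable (by simp)
  have hcg' : Continuous fun x => fderiv ℝ g x v := by
    have := pd_contDiff hg j
    exact this.continuous
  have h1 : (fun x => fderiv ℝ (⇑φ) x v * g x) = fun _ => 0 := by
    funext x
    by_cases hx : x ∈ tsupport g
    · rw [hφd x hx]; simp
    · rw [image_eq_zero_of_notMem_tsupport hx, mul_zero]
  have hint1 : Integrable (fun x => fderiv ℝ (⇑φ) x v * g x) := by
    rw [h1]; exact integrable_zero _ _ _
  have hint2 : Integrable (fun x => φ x * fderiv ℝ g x v) :=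
    (φ.continuous.mul hcg').integrable_of_hasCompactSupport
      (HasCompactSupport.mul_left (hgc.fderiv_apply ℝ v))
  have hint3 : Integrable (fun x => φ x * g x) :=
    (φ.continuous.mul hg.continuous).integrable_of_hasCompactSupport
      (HasCompactSupport.mul_left hgc)
  have hibp := integral_mul_fderiv_eq_neg_fderiv_mul_of_integrable hint1 hint2 hint3
    (fun x _ => (φ.contDiff (n := 1)).differentiable one_ne_zero x) (fun x _ => hgd x)
  have heq : (fun x => pd j g x) = fun x => φ x * fderiv ℝ g x v := by
    funext x
    by_cases hx : x ∈ tsupport g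
    · rw [hφ1 x (hr hx), one_mul]; rfl
    · have h2 : fderiv ℝ g x = 0 := fderiv_of_notMem_tsupport ℝ hx
      simp [pd, h2, hv]
  rw [heq, hibp, h1]
  simp

end PD

lemma alg_identity {d : ℕ} (A B Wv : Fin d → ℝ) (Hχ Hψ Wd : Fin d → Fin d → ℝ)
    (hχs : ∀ i j, Hχ i j = Hχ j i) (hψs : ∀ i j, Hψ i j = Hψ j i)
    (hdiv : ∑ j, Wd j j = 0) :
    (∑ i, A i * (-(∑ j, B j * (Wd j i + Wd i j)) + (∑ j, (Wd i j * B j + Wv j * Hψ i j))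
        - Wv i * (∑ j, Hψ j j)))
      = ∑ j, ((Wd j j * (∑ i, A i * B i) + Wv j * (∑ i, (Hχ j i * B i + A i * Hψ j i)))
        - (Hψ j j * (∑ i, A i * Wv i) + B j * (∑ i, (Hχ j i * Wv i + A i * Wd j i)))) := by
  have expand1 : ∀ i, A i * (-(∑ j, B j * (Wd j i + Wd i j))
        + (∑ j, (Wd i j * B j + Wv j * Hψ i j)) - Wv i * (∑ j, Hψ j j))
      = ∑ j, (A i * (Wd i j * B j + Wv j * Hψ i j) - A i * (B j * (Wd j i + Wd i j))
          - A i * Wv i * Hψ j j) := by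
    intro i
    simp only [Finset.sum_sub_distrib, ← Finset.mul_sum]
    ring
  have expand2 : ∀ j, ((Wd j j * (∑ i, A i * B i) + Wv j * (∑ i, (Hχ j i * B i + A i * Hψ j i)))
        - (Hψ j j * (∑ i, A i * Wv i) + B j * (∑ i, (Hχ j i * Wv i + A i * Wd j i))))
      = ∑ i, (Wd j j * (A i * B i) + Wv j * (Hχ j i * B i + A i * Hψ j i)
          - Hψ j j * (A i * Wv i) - B j * (Hχ j i * Wv i + A i * Wd j i)) := by
    intro j
    simp only [Finset.sum_sub_distrib, Finset.sum_add_distrib, ← Finset.mul_sum]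
    ring
  have hpt : ∀ i j, Wd j j * (A i * B i) + Wv j * (Hχ j i * B i + A i * Hψ j i)
        - Hψ j j * (A i * Wv i) - B j * (Hχ j i * Wv i + A i * Wd j i)
      = (A i * (Wd i j * B j + Wv j * Hψ i j) - A i * (B j * (Wd j i + Wd i j))
          - A i * Wv i * Hψ j j)
        + (Wd j j * (A i * B i) + (Wv j * Hχ j i * B i - B j * Hχ j i * Wv i)) := by
    intro i j
    linear_combination (Wv j * A i) * hψs j i
  have h1 : ∀ i, ∑ j, Wd j j * (A i * B i) = 0 := by
    intro i
    rw [← Finset.sum_mul, hdiv, zero_mul]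
  have h2 : ∑ i, ∑ j, (Wv j * Hχ j i * B i) = ∑ i, ∑ j, (B j * Hχ j i * Wv i) := by
    rw [Finset.sum_comm]
    exact Finset.sum_congr rfl fun x _ => Finset.sum_congr rfl fun y _ => by
      rw [hχs x y]; ring
  calc (∑ i, A i * (-(∑ j, B j * (Wd j i + Wd i j)) + (∑ j, (Wd i j * B j + Wv j * Hψ i j))
        - Wv i * (∑ j, Hψ j j)))
      = ∑ i, ∑ j, (A i * (Wd i j * B j + Wv j * Hψ i j) - A i * (B j * (Wd j i + Wd i j))
          - A i * Wv i * Hψ j j) := Finset.sum_congr rfl fun i _ => expand1 i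
    _ = ∑ i, ∑ j, ((A i * (Wd i j * B j + Wv j * Hψ i j) - A i * (B j * (Wd j i + Wd i j))
          - A i * Wv i * Hψ j j)
        + (Wd j j * (A i * B i) + (Wv j * Hχ j i * B i - B j * Hχ j i * Wv i))) := by
        rw [Finset.sum_congr rfl fun i (_ : i ∈ Finset.univ) => Finset.sum_add_distrib]
        rw [Finset.sum_add_distrib]
        have hz : ∑ i, ∑ j, (Wd j j * (A i * B i)
            + (Wv j * Hχ j i * B i - B j * Hχ j i * Wv i)) = 0 := by
          simp only [Finset.sum_add_distrib, Finset.sum_sub_distrib, h1]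
          simp only [Finset.sum_const_zero, zero_add, h2, sub_self]
        rw [hz, add_zero]
    _ = ∑ i, ∑ j, (Wd j j * (A i * B i) + Wv j * (Hχ j i * B i + A i * Hψ j i)
          - Hψ j j * (A i * Wv i) - B j * (Hχ j i * Wv i + A i * Wd j i)) :=
        Finset.sum_congr rfl fun i _ => Finset.sum_congr rfl fun j _ => (hpt i j).symm
    _ = ∑ j, ∑ i, (Wd j j * (A i * B i) + Wv j * (Hχ j i * B i + A i * Hψ j i)
          - Hψ j j * (A i * Wv i) - B j * (Hχ j i * Wv i + A i * Wd j i)) := Finset.sum_comm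
    _ = _ := Finset.sum_congr rfl fun j _ => (expand2 j).symm

/-- The identity behind `J^{L1}`: for gradient fields `∇χ`, `∇ψ` and a
divergence-free field `ω`,
`∫ ∂_i χ [ -∂_j ψ (ω_{i,j} + ω_{j,i}) + ∂_i (ω·∇ψ) - ω_i Δψ ] = 0`. -/
theorem JL1_identity (d : ℕ) (hd : 1 ≤ d)
    (χ ψ : EuclideanSpace ℝ (Fin d) → ℝ)
    (hχ : ContDiff ℝ (⊤ : ℕ∞) χ) (hχc : HasCompactSupport χ)
    (hψ : ContDiff ℝ (⊤ : ℕ∞) ψ) (hψc : HasCompactSupport ψ)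
    (ω : EuclideanSpace ℝ (Fin d) → EuclideanSpace ℝ (Fin d))
    (hω : ContDiff ℝ (⊤ : ℕ∞) ω) (hωc : HasCompactSupport ω)
    (hdiv : ∀ x, ∑ i, pd i (fun y => ω y i) x = 0) :
    (∑ i, ∫ x, pd i χ x *
        (-(∑ j, pd j ψ x * (pd j (fun y => ω y i) x + pd i (fun y => ω y j) x))
          + pd i (fun y => ∑ j, ω y j * pd j ψ y) x
          - ω x i * (∑ j, pd j (pd j ψ) x))) = 0 := by
  have hW : ∀ i, ContDiff ℝ (⊤ : ℕ∞) (fun y => ω y i) := fun i => by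
    have h := ((EuclideanSpace.proj i : EuclideanSpace ℝ (Fin d) →L[ℝ] ℝ).contDiff
      (n := (⊤ : ℕ∞))).comp hω
    exact h
  have hWc : ∀ i, HasCompactSupport (fun y => ω y i) := fun i =>
    hωc.comp_left (g := fun z : EuclideanSpace ℝ (Fin d) => z i) rfl
  have hS : ContDiff ℝ (⊤ : ℕ∞) (fun y => ∑ i, pd i χ y * pd i ψ y) :=
    ContDiff.sum fun i _ => (pd_contDiff hχ i).mul (pd_contDiff hψ i)
  have hP : ContDiff ℝ (⊤ : ℕ∞) (fun y => ∑ i, pd i χ y * ω y i) :=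
    ContDiff.sum fun i _ => (pd_contDiff hχ i).mul (hW i)
  have hG : ∀ j, ContDiff ℝ (⊤ : ℕ∞) (fun y => ω y j * (∑ i, pd i χ y * pd i ψ y)
      - pd j ψ y * (∑ i, pd i χ y * ω y i)) := fun j =>
    ((hW j).mul hS).sub ((pd_contDiff hψ j).mul hP)
  have hGc : ∀ j, HasCompactSupport (fun y => ω y j * (∑ i, pd i χ y * pd i ψ y)
      - pd j ψ y * (∑ i, pd i χ y * ω y i)) := fun j =>
    HasCompactSupport.comp₂_left ((hWc j).mul_right) ((pd_hcs hψc j).mul_right) (by simp)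
  have hQ : ContDiff ℝ (⊤ : ℕ∞) (fun y => ∑ j, ω y j * pd j ψ y) :=
    ContDiff.sum fun j _ => (hW j).mul (pd_contDiff hψ j)
  have hint : ∀ i ∈ Finset.univ, Integrable (fun x => pd i χ x *
      (-(∑ j, pd j ψ x * (pd j (fun y => ω y i) x + pd i (fun y => ω y j) x))
        + pd i (fun y => ∑ j, ω y j * pd j ψ y) x
        - ω x i * (∑ j, pd j (pd j ψ) x))) := by
    intro i _
    have c1 : Continuous fun x => ∑ j, pd j ψ x *
        (pd j (fun y => ω y i) x + pd i (fun y => ω y j) x) :=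
      continuous_finset_sum _ fun j _ => (pd_contDiff hψ j).continuous.mul
        ((pd_contDiff (hW i) j).continuous.add (pd_contDiff (hW j) i).continuous)
    have c2 : Continuous fun x => pd i (fun y => ∑ j, ω y j * pd j ψ y) x :=
      (pd_contDiff hQ i).continuous
    have c3 : Continuous fun x => ω x i * (∑ j, pd j (pd j ψ) x) :=
      (hW i).continuous.mul (continuous_finset_sum _ fun j _ =>
        (pd_contDiff (pd_contDiff hψ j) j).continuous)
    exact ((pd_contDiff hχ i).continuous.mul
      ((c1.neg.add c2).sub c3)).integrable_of_hasCompactSupport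
      ((pd_hcs hχc i).mul_right)
  have key : ∀ x, (∑ i, pd i χ x *
      (-(∑ j, pd j ψ x * (pd j (fun y => ω y i) x + pd i (fun y => ω y j) x))
        + pd i (fun y => ∑ j, ω y j * pd j ψ y) x
        - ω x i * (∑ j, pd j (pd j ψ) x)))
      = ∑ j, pd j (fun y => ω y j * (∑ i, pd i χ y * pd i ψ y)
          - pd j ψ y * (∑ i, pd i χ y * ω y i)) x := by
    intro x
    have hmid : ∀ i, pd i (fun y => ∑ j, ω y j * pd j ψ y) x
        = ∑ j, (pd i (fun y => ω y j) x * pd j ψ x + ω x j * pd i (pd j ψ) x) := by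
      intro i
      calc pd i (fun y => ∑ j, ω y j * pd j ψ y) x
          = ∑ j, pd i (fun y => ω y j * pd j ψ y) x :=
            pd_sum (fun j => (hW j).mul (pd_contDiff hψ j)) i x
        _ = _ := Finset.sum_congr rfl fun j _ => pd_mul (hW j) (pd_contDiff hψ j) i x
    have hpdS : ∀ j, pd j (fun y => ∑ i, pd i χ y * pd i ψ y) x
        = ∑ i, (pd j (pd i χ) x * pd i ψ x + pd i χ x * pd j (pd i ψ) x) := by
      intro j
      calc pd j (fun y => ∑ i, pd i χ y * pd i ψ y) x
          = ∑ i, pd j (fun y => pd i χ y * pd i ψ y) x :=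
            pd_sum (fun i => (pd_contDiff hχ i).mul (pd_contDiff hψ i)) j x
        _ = _ := Finset.sum_congr rfl fun i _ =>
            pd_mul (pd_contDiff hχ i) (pd_contDiff hψ i) j x
    have hpdP : ∀ j, pd j (fun y => ∑ i, pd i χ y * ω y i) x
        = ∑ i, (pd j (pd i χ) x * ω x i + pd i χ x * pd j (fun y => ω y i) x) := by
      intro j
      calc pd j (fun y => ∑ i, pd i χ y * ω y i) x
          = ∑ i, pd j (fun y => pd i χ y * ω y i) x :=
            pd_sum (fun i => (pd_contDiff hχ i).mul (hW i)) j x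
        _ = _ := Finset.sum_congr rfl fun i _ => pd_mul (pd_contDiff hχ i) (hW i) j x
    have hGj : ∀ j, pd j (fun y => ω y j * (∑ i, pd i χ y * pd i ψ y)
          - pd j ψ y * (∑ i, pd i χ y * ω y i)) x
        = (pd j (fun y => ω y j) x * (∑ i, pd i χ x * pd i ψ x)
            + ω x j * (∑ i, (pd j (pd i χ) x * pd i ψ x + pd i χ x * pd j (pd i ψ) x)))
          - (pd j (pd j ψ) x * (∑ i, pd i χ x * ω x i)
            + pd j ψ x * (∑ i, (pd j (pd i χ) x * ω x i
              + pd i χ x * pd j (fun y => ω y i) x))) := by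
      intro j
      calc pd j (fun y => ω y j * (∑ i, pd i χ y * pd i ψ y)
              - pd j ψ y * (∑ i, pd i χ y * ω y i)) x
          = pd j (fun y => ω y j * (∑ i, pd i χ y * pd i ψ y)) x
            - pd j (fun y => pd j ψ y * (∑ i, pd i χ y * ω y i)) x :=
            pd_sub ((hW j).mul hS) ((pd_contDiff hψ j).mul hP) j x
        _ = (pd j (fun y => ω y j) x * (∑ i, pd i χ x * pd i ψ x)
              + ω x j * pd j (fun y => ∑ i, pd i χ y * pd i ψ y) x)
            - (pd j (pd j ψ) x * (∑ i, pd i χ x * ω x i)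
              + pd j ψ x * pd j (fun y => ∑ i, pd i χ y * ω y i) x) := by
            rw [pd_mul (hW j) hS j x, pd_mul (pd_contDiff hψ j) hP j x]
        _ = _ := by rw [hpdS j, hpdP j]
    calc (∑ i, pd i χ x *
        (-(∑ j, pd j ψ x * (pd j (fun y => ω y i) x + pd i (fun y => ω y j) x))
          + pd i (fun y => ∑ j, ω y j * pd j ψ y) x
          - ω x i * (∑ j, pd j (pd j ψ) x)))
        = ∑ i, pd i χ x *
          (-(∑ j, pd j ψ x * (pd j (fun y => ω y i) x + pd i (fun y => ω y j) x))
            + (∑ j, (pd i (fun y => ω y j) x * pd j ψ x + ω x j * pd i (pd j ψ) x))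
            - ω x i * (∑ j, pd j (pd j ψ) x)) :=
          Finset.sum_congr rfl fun i _ => by rw [hmid i]
      _ = ∑ j, ((pd j (fun y => ω y j) x * (∑ i, pd i χ x * pd i ψ x)
            + ω x j * (∑ i, (pd j (pd i χ) x * pd i ψ x + pd i χ x * pd j (pd i ψ) x)))
          - (pd j (pd j ψ) x * (∑ i, pd i χ x * ω x i)
            + pd j ψ x * (∑ i, (pd j (pd i χ) x * ω x i
              + pd i χ x * pd j (fun y => ω y i) x)))) :=
          alg_identity (fun i => pd i χ x) (fun i => pd i ψ x) (fun i => ω x i)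
            (fun i j => pd i (pd j χ) x) (fun i j => pd i (pd j ψ) x)
            (fun i j => pd i (fun y => ω y j) x)
            (fun i j => pd_comm hχ i j x) (fun i j => pd_comm hψ i j x) (hdiv x)
      _ = _ := Finset.sum_congr rfl fun j _ => (hGj j).symm
  calc (∑ i, ∫ x, pd i χ x *
        (-(∑ j, pd j ψ x * (pd j (fun y => ω y i) x + pd i (fun y => ω y j) x))
          + pd i (fun y => ∑ j, ω y j * pd j ψ y) x
          - ω x i * (∑ j, pd j (pd j ψ) x)))
      = ∫ x, ∑ i, pd i χ x *
        (-(∑ j, pd j ψ x * (pd j (fun y => ω y i) x + pd i (fun y => ω y j) x))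
          + pd i (fun y => ∑ j, ω y j * pd j ψ y) x
          - ω x i * (∑ j, pd j (pd j ψ) x)) := (integral_finset_sum _ hint).symm
    _ = ∫ x, ∑ j, pd j (fun y => ω y j * (∑ i, pd i χ y * pd i ψ y)
          - pd j ψ y * (∑ i, pd i χ y * ω y i)) x := by
        exact congrArg (fun h : (EuclideanSpace ℝ (Fin d)) → ℝ => ∫ x, h x) (funext key)
    _ = ∑ j, ∫ x, pd j (fun y => ω y j * (∑ i, pd i χ y * pd i ψ y)
          - pd j ψ y * (∑ i, pd i χ y * ω y i)) x :=
        integral_finset_sum _ fun j _ =>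
          ((pd_contDiff (hG j) j).continuous).integrable_of_hasCompactSupport
            (pd_hcs (hGc j) j)
    _ = 0 := Finset.sum_eq_zero fun j _ => integral_pd_eq_zero (hG j) (hGc j) j
end
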